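/- Let n ≥ 2, A ∈ ℝ^{m×n}, b ∈ ℝ^m, and let p be the fused lasso regularizer with parameters λ₁, λ₂ ≥ 0. Define f(x) := −(1/2)‖Ax − b‖² − p(x) for x ∈ ℝ^n, and let Ξ := {y ∈ ℝ^m : ⟨−Aᵀy, x⟩ ≤ p(x) for all x ∈ ℝ^n}. Then there exist x* ∈ ℝ^n and y* ∈ Ξ such that x* maximizes f over ℝ^n, y* minimizes y ↦ (1/2)‖y‖² + ⟨y, b⟩ over Ξ, y* = Ax* − b, and f(x*) = (1/2)‖y*‖² + ⟨y*, b⟩. -/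
import Mathlib


open Matrix

noncomputable def l2norm {m : ℕ} (v : Fin m → ℝ) : ℝ := Real.sqrt (∑ i, (v i) ^ 2)

def dot {m : ℕ} (u v : Fin m → ℝ) : ℝ := ∑ i, u i * v i

/-- The fused lasso regularizer `p(x) = λ₁‖x‖₁ + λ₂‖Bx‖₁`. -/
noncomputable def fusedLasso {n : ℕ} (B : Matrix (Fin (n - 1)) (Fin n) ℝ)
    (lam1 lam2 : ℝ) (x : Fin n → ℝ) : ℝ :=
  lam1 * (∑ i, |x i|) + lam2 * (∑ i, |B.mulVec x i|)

/-- Existence of a minimizer of the primal objective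
`h(x) = (1/2)‖Ax − b‖² + λ₁‖x‖₁ + λ₂‖Bx‖₁`. -/
lemma exists_min_aux {m n k : ℕ} (A : Matrix (Fin m) (Fin n) ℝ) (B : Matrix (Fin k) (Fin n) ℝ)
    (b : Fin m → ℝ) (lam1 lam2 : ℝ) (h1 : 0 ≤ lam1) (h2 : 0 ≤ lam2) :
    ∃ x0 : Fin n → ℝ, ∀ x : Fin n → ℝ,
      (1/2) * (∑ i, ((A.mulVec x0) i - b i) ^ 2) + (lam1 * ∑ i, |x0 i| + lam2 * ∑ i, |B.mulVec x0 i|)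
      ≤ (1/2) * (∑ i, ((A.mulVec x) i - b i) ^ 2) + (lam1 * ∑ i, |x i| + lam2 * ∑ i, |B.mulVec x i|) := by
  classical
  set ψ : (Fin m → ℝ) × (Fin n → ℝ) × (Fin k → ℝ) → ℝ :=
    fun y => (1/2) * (∑ i, (y.1 i - b i) ^ 2) + (∑ i, |y.2.1 i| + ∑ i, |y.2.2 i|) with hψ
  have hψcont : Continuous ψ := by
    apply Continuous.add
    · exact continuous_const.mul (continuous_finset_sum _ fun i _ => by fun_prop)
    · exact Continuous.add
        (continuous_finset_sum _ fun i _ => by fun_prop)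
        (continuous_finset_sum _ fun i _ => by fun_prop)
  set L : (Fin n → ℝ) →ₗ[ℝ] (Fin m → ℝ) × (Fin n → ℝ) × (Fin k → ℝ) :=
    (Matrix.mulVecLin A).prod ((lam1 • LinearMap.id).prod (lam2 • Matrix.mulVecLin B)) with hL
  have hLx : ∀ x : Fin n → ℝ, L x = (A.mulVec x, lam1 • x, lam2 • B.mulVec x) := fun x => rfl
  have hψL : ∀ x : Fin n → ℝ, ψ (L x) =
      (1/2) * (∑ i, ((A.mulVec x) i - b i) ^ 2) + (lam1 * ∑ i, |x i| + lam2 * ∑ i, |B.mulVec x i|) := by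
    intro x
    simp only [hψ, hLx, Finset.mul_sum, Pi.smul_apply, smul_eq_mul, abs_mul,
      abs_of_nonneg h1, abs_of_nonneg h2]
  set S : Set ((Fin m → ℝ) × (Fin n → ℝ) × (Fin k → ℝ)) :=
    SetLike.coe (LinearMap.range L) with hS
  have hSclosed : IsClosed S := Submodule.closed_of_finiteDimensional _
  set c0 : ℝ := ψ 0 with hc0
  have hc0nn : 0 ≤ c0 := by
    simp only [hc0, hψ]
    positivity
  set C : Set _ := S ∩ {y | ψ y ≤ c0} with hC
  clear_value c0
  -- bounds on members of C
  have hbound : ∀ y ∈ C, ‖y‖ ≤ Real.sqrt (2 * c0) + ‖b‖ + c0 := by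
    rintro ⟨u, p, q⟩ ⟨-, hy⟩
    simp only [Set.mem_setOf_eq, hψ] at hy
    have hsum1 : ∑ i, |p i| ≤ c0 := by
      have h0 : (0:ℝ) ≤ (1/2) * (∑ i, (u i - b i) ^ 2) := by positivity
      have h0' : (0:ℝ) ≤ ∑ i, |q i| := Finset.sum_nonneg fun i _ => abs_nonneg _
      linarith
    have hsum2 : ∑ i, |q i| ≤ c0 := by
      have h0 : (0:ℝ) ≤ (1/2) * (∑ i, (u i - b i) ^ 2) := by positivity
      have h0' : (0:ℝ) ≤ ∑ i, |p i| := Finset.sum_nonneg fun i _ => abs_nonneg _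
      linarith
    have hsumu : ∑ i, (u i - b i) ^ 2 ≤ 2 * c0 := by
      have h0' : (0:ℝ) ≤ ∑ i, |p i| := Finset.sum_nonneg fun i _ => abs_nonneg _
      have h0'' : (0:ℝ) ≤ ∑ i, |q i| := Finset.sum_nonneg fun i _ => abs_nonneg _
      linarith
    have hR : (0:ℝ) ≤ Real.sqrt (2 * c0) + ‖b‖ + c0 := by positivity
    have hnu : ‖u‖ ≤ Real.sqrt (2 * c0) + ‖b‖ := by
      rw [pi_norm_le_iff_of_nonneg (by positivity)]
      intro i
      have h1 : (u i - b i) ^ 2 ≤ 2 * c0 :=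
        le_trans (Finset.single_le_sum (f := fun j => (u j - b j) ^ 2)
          (fun j _ => sq_nonneg _) (Finset.mem_univ i)) hsumu
      have h2 : |u i - b i| ≤ Real.sqrt (2 * c0) := by
        rw [← Real.sqrt_sq_eq_abs]
        exact Real.sqrt_le_sqrt h1
      have h3 : |b i| ≤ ‖b‖ := by
        simpa [Real.norm_eq_abs] using norm_le_pi_norm b i
      calc ‖u i‖ = |u i| := rfl
        _ ≤ |u i - b i| + |b i| := by
            have := abs_add_le (u i - b i) (b i); simpa using this
        _ ≤ Real.sqrt (2 * c0) + ‖b‖ := add_le_add h2 h3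
    have hnp : ‖p‖ ≤ c0 := by
      rw [pi_norm_le_iff_of_nonneg hc0nn]
      intro i
      calc ‖p i‖ = |p i| := rfl
        _ ≤ ∑ j, |p j| := Finset.single_le_sum (f := fun j => |p j|) (fun j _ => abs_nonneg _) (Finset.mem_univ i)
        _ ≤ c0 := hsum1
    have hnq : ‖q‖ ≤ c0 := by
      rw [pi_norm_le_iff_of_nonneg hc0nn]
      intro i
      calc ‖q i‖ = |q i| := rfl
        _ ≤ ∑ j, |q j| := Finset.single_le_sum (f := fun j => |q j|) (fun j _ => abs_nonneg _) (Finset.mem_univ i)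
        _ ≤ c0 := hsum2
    have : ‖((u, p, q) : (Fin m → ℝ) × (Fin n → ℝ) × (Fin k → ℝ))‖
        = max ‖u‖ (max ‖p‖ ‖q‖) := rfl
    rw [this]
    have hb0 : (0:ℝ) ≤ ‖b‖ := norm_nonneg _
    have hs0 : (0:ℝ) ≤ Real.sqrt (2 * c0) := Real.sqrt_nonneg _
    apply max_le (by linarith) (max_le (by linarith) (by linarith))
  have hCbdd : Bornology.IsBounded C := by
    apply Bornology.IsBounded.subset (Metric.isBounded_closedBall
      (x := (0 : (Fin m → ℝ) × (Fin n → ℝ) × (Fin k → ℝ))) (r := Real.sqrt (2 * c0) + ‖b‖ + c0))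
    intro y hy
    simpa [Metric.mem_closedBall, dist_zero_right] using hbound y hy
  have hCcompact : IsCompact C :=
    Metric.isCompact_of_isClosed_isBounded
      ((Submodule.closed_of_finiteDimensional _).inter (isClosed_le hψcont continuous_const)) hCbdd
  have hCne : C.Nonempty :=
    ⟨0, Submodule.zero_mem _, by simp only [Set.mem_setOf_eq]; linarith [hc0.ge]⟩
  obtain ⟨ystar, hymem, hymin⟩ := hCcompact.exists_isMinOn hCne hψcont.continuousOn
  obtain ⟨x0, hx0⟩ : ∃ x0, L x0 = ystar := hymem.1
  refine ⟨x0, fun x => ?_⟩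
  rw [← hψL, ← hψL, hx0]
  by_cases hcase : ψ (L x) ≤ c0
  · exact hymin ⟨LinearMap.mem_range_self L x, hcase⟩
  · have : ψ ystar ≤ c0 := hymem.2
    push_neg at hcase
    linarith

lemma l2norm_sq {k : ℕ} (v : Fin k → ℝ) : (l2norm v) ^ 2 = ∑ i, (v i) ^ 2 :=
  Real.sq_sqrt (Finset.sum_nonneg fun i _ => sq_nonneg _)

lemma sum_sq_expand {k : ℕ} (y w : Fin k → ℝ) (t : ℝ) :
    ∑ i, (y i + t * w i) ^ 2
      = ∑ i, (y i) ^ 2 + 2 * t * (∑ i, y i * w i) + t ^ 2 * ∑ i, (w i) ^ 2 := by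
  rw [Finset.mul_sum, Finset.mul_sum, ← Finset.sum_add_distrib, ← Finset.sum_add_distrib]
  exact Finset.sum_congr rfl fun i _ => by ring

lemma dot_adj {m n : ℕ} (A : Matrix (Fin m) (Fin n) ℝ) (y : Fin m → ℝ) (x : Fin n → ℝ) :
    dot (Aᵀ.mulVec y) x = dot y (A.mulVec x) := by
  simp only [dot, Matrix.mulVec, dotProduct, Matrix.transpose_apply, Finset.sum_mul,
    Finset.mul_sum]
  rw [Finset.sum_comm]
  exact Finset.sum_congr rfl fun i _ => Finset.sum_congr rfl fun l _ => by ring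

lemma dot_neg {k : ℕ} (u v : Fin k → ℝ) : dot (-u) v = -(dot u v) := by
  simp [dot, Finset.sum_neg_distrib]

lemma fusedLasso_smul {n : ℕ} (B : Matrix (Fin (n - 1)) (Fin n) ℝ) (lam1 lam2 c : ℝ)
    (hc : 0 ≤ c) (x : Fin n → ℝ) :
    fusedLasso B lam1 lam2 (c • x) = c * fusedLasso B lam1 lam2 x := by
  simp only [fusedLasso, Matrix.mulVec_smul, Pi.smul_apply, smul_eq_mul, abs_mul,
    abs_of_nonneg hc, ← Finset.mul_sum]
  ring

lemma fusedLasso_convex {n : ℕ} (B : Matrix (Fin (n - 1)) (Fin n) ℝ) (lam1 lam2 : ℝ)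
    (h1 : 0 ≤ lam1) (h2 : 0 ≤ lam2) (u v : Fin n → ℝ) (t : ℝ) (ht0 : 0 ≤ t) (ht1 : t ≤ 1) :
    fusedLasso B lam1 lam2 ((1 - t) • u + t • v)
      ≤ (1 - t) * fusedLasso B lam1 lam2 u + t * fusedLasso B lam1 lam2 v := by
  have habs : ∀ a c : ℝ, |(1 - t) * a + t * c| ≤ (1 - t) * |a| + t * |c| := by
    intro a c
    calc |(1 - t) * a + t * c| ≤ |(1 - t) * a| + |t * c| := abs_add_le _ _
      _ = (1 - t) * |a| + t * |c| := by
          rw [abs_mul, abs_mul, abs_of_nonneg (by linarith), abs_of_nonneg ht0]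
  have key1 : ∑ i, |((1 - t) • u + t • v) i| ≤ (1 - t) * (∑ i, |u i|) + t * (∑ i, |v i|) := by
    rw [Finset.mul_sum, Finset.mul_sum, ← Finset.sum_add_distrib]
    exact Finset.sum_le_sum fun i _ => by
      simpa [Pi.add_apply, Pi.smul_apply, smul_eq_mul] using habs (u i) (v i)
  have hBv : B.mulVec ((1 - t) • u + t • v) = (1 - t) • B.mulVec u + t • B.mulVec v := by
    rw [Matrix.mulVec_add, Matrix.mulVec_smul, Matrix.mulVec_smul]
  have key2 : ∑ i, |B.mulVec ((1 - t) • u + t • v) i|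
      ≤ (1 - t) * (∑ i, |B.mulVec u i|) + t * (∑ i, |B.mulVec v i|) := by
    rw [hBv, Finset.mul_sum, Finset.mul_sum, ← Finset.sum_add_distrib]
    exact Finset.sum_le_sum fun i _ => by
      simpa [Pi.add_apply, Pi.smul_apply, smul_eq_mul] using habs (B.mulVec u i) (B.mulVec v i)
  simp only [fusedLasso]
  have := mul_le_mul_of_nonneg_left key1 h1
  have := mul_le_mul_of_nonneg_left key2 h2
  nlinarith

lemma nonneg_of_forall_small {c K : ℝ} (hK : 0 ≤ K)
    (h : ∀ t : ℝ, 0 < t → t ≤ 1 → -(t / 2) * K ≤ c) : 0 ≤ c := by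
  by_contra hc
  push_neg at hc
  set t : ℝ := min 1 (-c / (K + 1)) with ht
  have htpos : 0 < t := lt_min one_pos (div_pos (by linarith) (by linarith))
  have ht1 : t ≤ 1 := min_le_left _ _
  have h2 : t ≤ -c / (K + 1) := min_le_right _ _
  have h3 : t * (K + 1) ≤ -c := by
    rw [← le_div_iff₀ (by linarith : (0:ℝ) < K + 1)]
    exact h2
  have h4 := h t htpos ht1
  nlinarith

/-- Strong duality between the primal problem `(P) max f` with
`f(x) = −(1/2)‖Ax − b‖² − p(x)` and the dual problem `(D) min (1/2)‖y‖² + ⟨y,b⟩` over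
`Ξ = {y : ⟨−Aᵀy, x⟩ ≤ p(x) ∀x}`: optimal solutions `x*`, `y*` exist with
`y* = Ax* − b` and equal optimal values. -/
theorem fused_lasso_strong_duality {m n : ℕ} (hn : 2 ≤ n)
    (A : Matrix (Fin m) (Fin n) ℝ) (b : Fin m → ℝ)
    (lam1 lam2 : ℝ) (hlam1 : 0 ≤ lam1) (hlam2 : 0 ≤ lam2)
    (B : Matrix (Fin (n - 1)) (Fin n) ℝ)
    (hB : ∀ (i : Fin (n - 1)) (l : Fin n),
      B i l = if (l : ℕ) = (i : ℕ) then 1 else if (l : ℕ) = (i : ℕ) + 1 then -1 else 0) :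
    ∃ (xstar : Fin n → ℝ) (ystar : Fin m → ℝ),
      (∀ x : Fin n → ℝ, dot (-(Aᵀ.mulVec ystar)) x ≤ fusedLasso B lam1 lam2 x) ∧
      (∀ x : Fin n → ℝ,
        -(1/2) * (l2norm (A.mulVec x - b))^2 - fusedLasso B lam1 lam2 x ≤
        -(1/2) * (l2norm (A.mulVec xstar - b))^2 - fusedLasso B lam1 lam2 xstar) ∧
      (∀ y : Fin m → ℝ,
        (∀ x : Fin n → ℝ, dot (-(Aᵀ.mulVec y)) x ≤ fusedLasso B lam1 lam2 x) →
        (1/2) * (l2norm ystar)^2 + dot ystar b ≤ (1/2) * (l2norm y)^2 + dot y b) ∧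
      ystar = A.mulVec xstar - b ∧
      -(1/2) * (l2norm (A.mulVec xstar - b))^2 - fusedLasso B lam1 lam2 xstar =
        (1/2) * (l2norm ystar)^2 + dot ystar b := by
  classical
  obtain ⟨xs, hxs⟩ := exists_min_aux A B b lam1 lam2 hlam1 hlam2
  set p : (Fin n → ℝ) → ℝ := fusedLasso B lam1 lam2 with hpdef
  have hP : ∀ z : Fin n → ℝ,
      lam1 * ∑ i, |z i| + lam2 * ∑ i, |B.mulVec z i| = p z := fun z => rfl
  set ys : Fin m → ℝ := A.mulVec xs - b with hys
  have hysi : ∀ i, ys i = (A.mulVec xs) i - b i := fun i => rfl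
  -- The key variational inequality
  have hstar : ∀ x : Fin n → ℝ,
      0 ≤ (dot ys (A.mulVec x) - dot ys (A.mulVec xs)) + (p x - p xs) := by
    intro x
    set d : Fin n → ℝ := x - xs with hd
    have hAd : ∀ t : ℝ, ∀ i, (A.mulVec (xs + t • d)) i - b i = ys i + t * (A.mulVec d) i := by
      intro t i
      rw [Matrix.mulVec_add, Matrix.mulVec_smul]
      simp only [Pi.add_apply, Pi.smul_apply, smul_eq_mul, hysi]
      ring
    have hD : ∑ i, ys i * (A.mulVec d) i
        = dot ys (A.mulVec x) - dot ys (A.mulVec xs) := by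
      simp only [hd, Matrix.mulVec_sub, dot, Pi.sub_apply, mul_sub, Finset.sum_sub_distrib]
    apply nonneg_of_forall_small (K := ∑ i, ((A.mulVec d) i) ^ 2)
      (Finset.sum_nonneg fun i _ => sq_nonneg ((A.mulVec d) i))
    intro t ht0 ht1
    have hmin := hxs (xs + t • d)
    rw [hP, hP] at hmin
    have hq : ∑ i, ((A.mulVec (xs + t • d)) i - b i) ^ 2
        = ∑ i, (ys i) ^ 2 + 2 * t * (∑ i, ys i * (A.mulVec d) i)
          + t ^ 2 * ∑ i, ((A.mulVec d) i) ^ 2 := by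
      rw [← sum_sq_expand]
      exact Finset.sum_congr rfl fun i _ => by rw [hAd t i]
    have hconv : p (xs + t • d) ≤ (1 - t) * p xs + t * p x := by
      have hco : xs + t • d = (1 - t) • xs + t • x := by
        funext i
        simp only [hd, Pi.add_apply, Pi.smul_apply, Pi.sub_apply, smul_eq_mul]
        ring
      rw [hpdef, hco]
      exact fusedLasso_convex B lam1 lam2 hlam1 hlam2 xs x t ht0.le ht1
    have hQs : ∑ i, ((A.mulVec xs) i - b i) ^ 2 = ∑ i, (ys i) ^ 2 :=
      Finset.sum_congr rfl fun i _ => by rw [hysi]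
    rw [hq, hQs] at hmin
    have h5 : 0 ≤ t * (((∑ i, ys i * (A.mulVec d) i) + (p x - p xs))
        + (t / 2) * ∑ i, ((A.mulVec d) i) ^ 2) := by nlinarith
    have h6 : 0 ≤ ((∑ i, ys i * (A.mulVec d) i) + (p x - p xs))
        + (t / 2) * ∑ i, ((A.mulVec d) i) ^ 2 := by
      by_contra hneg
      push_neg at hneg
      nlinarith [mul_pos ht0 (neg_pos.2 hneg)]
    rw [hD] at h6
    linarith
  -- equality at the optimum
  have hzero : dot ys (A.mulVec xs) + p xs = 0 := by
    have h1 := hstar 0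
    have h2 := hstar ((2:ℝ) • xs)
    have e1 : dot ys (A.mulVec 0) = 0 := by simp [dot, Matrix.mulVec_zero]
    have e2 : p 0 = 0 := by simp [hpdef, fusedLasso, Matrix.mulVec_zero]
    have e3 : dot ys (A.mulVec ((2:ℝ) • xs)) = 2 * dot ys (A.mulVec xs) := by
      rw [Matrix.mulVec_smul]
      simp only [dot, Pi.smul_apply, smul_eq_mul, Finset.mul_sum]
      exact Finset.sum_congr rfl fun i _ => by ring
    have e4 : p ((2:ℝ) • xs) = 2 * p xs := fusedLasso_smul B lam1 lam2 2 (by norm_num) xs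
    rw [e1, e2] at h1
    rw [e3, e4] at h2
    linarith
  -- membership of ys in Ξ
  have hXi : ∀ x : Fin n → ℝ, dot (-(Aᵀ.mulVec ys)) x ≤ p x := by
    intro x
    rw [dot_neg, dot_adj]
    have := hstar x
    linarith
  -- dot ys (A.mulVec xs) in terms of ys and b
  have hdots : dot ys (A.mulVec xs) = (∑ i, (ys i) ^ 2) + dot ys b := by
    simp only [dot, ← Finset.sum_add_distrib]
    exact Finset.sum_congr rfl fun i _ => by
      have : (A.mulVec xs) i = ys i + b i := by rw [hysi]; ring
      rw [this]; ring
  have hys2 : (l2norm ys) ^ 2 = ∑ i, (ys i) ^ 2 := l2norm_sq ys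
  have hpxs : p xs = -((∑ i, (ys i) ^ 2) + dot ys b) := by
    rw [← hdots]; linarith [hzero]
  -- value equality
  have hval : -(1/2) * (l2norm (A.mulVec xs - b))^2 - p xs
      = (1/2) * (l2norm ys)^2 + dot ys b := by
    rw [show (A.mulVec xs - b) = ys from rfl, hys2, hpxs]
    ring
  refine ⟨xs, ys, hXi, ?_, ?_, rfl, hval⟩
  · -- primal optimality
    intro x
    have hmin := hxs x
    rw [hP, hP] at hmin
    have hx2 : (l2norm (A.mulVec x - b)) ^ 2 = ∑ i, ((A.mulVec x) i - b i) ^ 2 := by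
      rw [l2norm_sq]
      exact Finset.sum_congr rfl fun i _ => rfl
    have hxs2 : (l2norm (A.mulVec xs - b)) ^ 2 = ∑ i, ((A.mulVec xs) i - b i) ^ 2 := by
      rw [l2norm_sq]
      exact Finset.sum_congr rfl fun i _ => rfl
    rw [hx2, hxs2]
    linarith
  · -- dual optimality
    intro y hy
    have hyxs := hy xs
    rw [dot_neg, dot_adj] at hyxs
    have hdoty : dot y (A.mulVec xs) = (∑ i, y i * ys i) + dot y b := by
      simp only [dot, ← Finset.sum_add_distrib]
      exact Finset.sum_congr rfl fun i _ => by
        have : (A.mulVec xs) i = ys i + b i := by rw [hysi]; ring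
        rw [this]; ring
    have hsq : ∑ i, y i * ys i ≤ (1/2) * (∑ i, (y i) ^ 2) + (1/2) * (∑ i, (ys i) ^ 2) := by
      have := Finset.sum_le_sum (s := Finset.univ)
        (f := fun i => y i * ys i) (g := fun i => (1/2) * (y i) ^ 2 + (1/2) * (ys i) ^ 2)
        (fun i _ => by nlinarith [sq_nonneg (y i - ys i)])
      simpa [Finset.sum_add_distrib, Finset.mul_sum] using this
    have hy2 : (l2norm y) ^ 2 = ∑ i, (y i) ^ 2 := l2norm_sq y
    rw [hys2, hy2]
    rw [hpxs, hdoty] at hyxs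
    linarith
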